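/- arXiv:0806.0093 — 10 statements merged into one kernel-verified Lean document; each statement's English description precedes it below -/
import Mathlib

section
/- For every real r ≥ 0 and all reals x, y, h with 0 < x ≤ h ≤ y, one has (r + h - y)_+ < e^h · (e^{-x} + e^{-y} + e^{-(1/2)(x + y - r)_+} + (r - x - y)_+). -/
/-- For a real number `x`, its positive part `x₊ = max {x, 0}`. -/
noncomputable def ppart (x : ℝ) : ℝ := max x 0

lemma aux_ppart_lt_exp_half (u : ℝ) : max u 0 < Real.exp (u / 2) := by
  rcases le_or_gt u 0 with h | h
  · rw [max_eq_right h]; exact Real.exp_pos _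
  · rw [max_eq_left h.le]
    have h1 : u / 2 ≤ Real.exp (u / 2 - 1) := by
      have := Real.add_one_le_exp (u / 2 - 1); linarith
    have h2 : Real.exp (u / 2) = Real.exp 1 * Real.exp (u / 2 - 1) := by
      rw [← Real.exp_add]; ring_nf
    have he : (2 : ℝ) < Real.exp 1 := by
      have := Real.exp_one_gt_d9; linarith
    have hp : 0 < Real.exp (u / 2 - 1) := Real.exp_pos _
    nlinarith

/-- For every real `r ≥ 0` and all reals `x, y, h` with `0 < x ≤ h ≤ y`,
`(r + h - y)₊ < e^h (e^{-x} + e^{-y} + e^{-(1/2)(x + y - r)₊} + (r - x - y)₊)`. -/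
theorem stmt0 (r x y h : ℝ) (hr : 0 ≤ r) (hx : 0 < x) (hxh : x ≤ h) (hhy : h ≤ y) :
    ppart (r + h - y) <
      Real.exp h * (Real.exp (-x) + Real.exp (-y) +
        Real.exp (-(1/2) * ppart (x + y - r)) + ppart (r - x - y)) := by
  unfold ppart
  rcases le_or_gt (x + y - r) 0 with hc | hc
  · rw [max_eq_right hc, max_eq_left (by linarith : (0:ℝ) ≤ r - x - y)]
    simp only [mul_zero, Real.exp_zero]
    have h1 := Real.exp_pos (-x)
    have h2 := Real.exp_pos (-y)
    have h3 := Real.add_one_le_exp x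
    have h4 : Real.exp x ≤ Real.exp h := Real.exp_le_exp.mpr hxh
    have ht : 0 ≤ r - x - y := by linarith
    have h5 : max (r + h - y) 0 ≤ (r - x - y) + x + h := max_le (by linarith) (by linarith)
    have hq : (1 + h / 2) ^ 2 ≤ Real.exp h := by
      have e1 : h / 2 + 1 ≤ Real.exp (h / 2) := Real.add_one_le_exp (h / 2)
      have e2 : Real.exp h = Real.exp (h / 2) * Real.exp (h / 2) := by
        rw [← Real.exp_add]; ring_nf
      nlinarith [Real.exp_pos (h / 2)]
    have h6 : 1 ≤ Real.exp h := by nlinarith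
    have h7 : (r - x - y) ≤ Real.exp h * (r - x - y) :=
      le_mul_of_one_le_left ht h6
    have h8 : 0 < Real.exp h * (Real.exp (-x) + Real.exp (-y)) :=
      mul_pos (Real.exp_pos h) (by linarith)
    nlinarith [sq_nonneg (h / 2 - 1)]
  · rw [max_eq_left hc.le, max_eq_right (by linarith : r - x - y ≤ 0)]
    have key : Real.exp ((r + h - y) / 2) ≤
        Real.exp h * Real.exp (-(1/2) * (x + y - r)) := by
      rw [← Real.exp_add]
      apply Real.exp_le_exp.mpr
      linarith
    have haux := aux_ppart_lt_exp_half (r + h - y)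
    have h1 := Real.exp_pos (-x)
    have h2 := Real.exp_pos (-y)
    have h8 : 0 < Real.exp h * (Real.exp (-x) + Real.exp (-y)) :=
      mul_pos (Real.exp_pos h) (by linarith)
    nlinarith
end

section
/- For all reals r, y ≥ 0 and all reals x, h with 0 ≤ h ≤ x, one has e^h · (e^{-(1/2)(x + y - r)_+} + (r - x - y)_+) ≤ (1 + (r + h - y)_+) · e^{(1/2)(r + h - y)_+}. -/
/-- For all reals `r, y ≥ 0` and all reals `x, h` with `0 ≤ h ≤ x`,
`e^h (e^{-(1/2)(x + y - r)₊} + (r - x - y)₊) ≤ (1 + (r + h - y)₊) e^{(1/2)(r + h - y)₊}`. -/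
theorem stmt1 (r y x h : ℝ) (hr : 0 ≤ r) (hy : 0 ≤ y) (hh : 0 ≤ h) (hhx : h ≤ x) :
    Real.exp h * (Real.exp (-(1/2) * ppart (x + y - r)) + ppart (r - x - y)) ≤
      (1 + ppart (r + h - y)) * Real.exp ((1/2) * ppart (r + h - y)) := by
  unfold ppart
  rcases le_or_gt r (x + y) with hc | hc
  · rw [max_eq_left (by linarith : (0:ℝ) ≤ x + y - r),
      max_eq_right (by linarith : r - x - y ≤ 0), add_zero]
    have h1 : Real.exp h * Real.exp (-(1/2) * (x + y - r))
        = Real.exp (h - (1/2) * (x + y - r)) := by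
      rw [← Real.exp_add]; ring_nf
    rw [h1]
    have hm := le_max_left (r + h - y) (0:ℝ)
    have hm0 := le_max_right (r + h - y) (0:ℝ)
    calc Real.exp (h - (1/2) * (x + y - r))
        ≤ Real.exp ((1/2) * max (r + h - y) 0) :=
          Real.exp_le_exp.mpr (by nlinarith)
      _ ≤ (1 + max (r + h - y) 0) * Real.exp ((1/2) * max (r + h - y) 0) := by
          nlinarith [Real.exp_pos ((1/2) * max (r + h - y) 0)]
  · rw [max_eq_right (by linarith : x + y - r ≤ 0),
      max_eq_left (by linarith : (0:ℝ) ≤ r - x - y),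
      max_eq_left (by linarith : (0:ℝ) ≤ r + h - y)]
    rw [mul_zero, Real.exp_zero]
    have e1 : Real.exp h ≤ Real.exp ((1/2) * (r + h - y)) :=
      Real.exp_le_exp.mpr (by linarith)
    have pos1 : (0:ℝ) ≤ 1 + (r - x - y) := by linarith
    calc Real.exp h * (1 + (r - x - y))
        ≤ Real.exp ((1/2) * (r + h - y)) * (1 + (r + h - y)) :=
          mul_le_mul e1 (by linarith) pos1 (Real.exp_pos _).le
      _ = (1 + (r + h - y)) * Real.exp ((1/2) * (r + h - y)) := mul_comm _ _
end

section
/- For every integer n ≥ 1 and every real h with 0 ≤ h ≤ l_n, the infimum of Γ_{nm}(h) over integers m ≥ 1 is attained, and it equals the minimum of Γ_{nm}(h) over integers m with A_n(h) ≤ m ≤ B_n(h). -/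
/-- `Δ(k) = e^{-l_k} + e^{-l_{k+1}} + e^{-(1/2)(l_k + l_{k+1} - r_k)₊} + (r_k - l_k - l_{k+1})₊`. -/
noncomputable def DeltaF (l r : ℕ → ℝ) (k : ℕ) : ℝ :=
  Real.exp (-l k) + Real.exp (-l (k + 1)) +
    Real.exp (-(1/2) * ppart (l k + l (k + 1) - r k)) + ppart (r k - l k - l (k + 1))

/-- The function `Γ_{nm}(h)` associated to the sequences `{l_n}` and `{r_n}`. -/
noncomputable def GammaF (l r : ℕ → ℝ) (n m : ℕ) (h : ℝ) : ℝ :=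
  if m < n then
    (if l m ≤ h then
      ppart (r m + h - l (m + 1)) + Real.exp h * ∑ k ∈ Finset.Icc (m + 1) (n - 1), DeltaF l r k
    else
      l m - h + Real.exp h * ∑ k ∈ Finset.Icc m (n - 1), DeltaF l r k)
  else if m = n then min h (l n - h)
  else
    (if l m ≤ h then
      ppart (r (m - 1) + h - l (m - 1)) + Real.exp h * ∑ k ∈ Finset.Icc n (m - 2), DeltaF l r k
    else
      l m - h + Real.exp h * ∑ k ∈ Finset.Icc n (m - 1), DeltaF l r k)

/-- `A_n(h)`: the largest positive integer `m < n` with `l_m ≤ h`, or `1` if there is none. -/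
noncomputable def AFun (l : ℕ → ℝ) (n : ℕ) (h : ℝ) : ℕ :=
  sSup ({1} ∪ {m : ℕ | 1 ≤ m ∧ m < n ∧ l m ≤ h})

/-- `B_n(h)`: the smallest integer `m > n` with `l_m ≤ h`, or `∞` if there is none. -/
noncomputable def BFun (l : ℕ → ℝ) (n : ℕ) (h : ℝ) : ℕ∞ :=
  sInf {x : ℕ∞ | ∃ m : ℕ, x = (m : ℕ∞) ∧ n < m ∧ l m ≤ h}

/-- `inf_{m ≥ 1} Γ_{nm}(h)`. -/
noncomputable def infGammaF (l r : ℕ → ℝ) (n : ℕ) (h : ℝ) : ℝ :=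
  sInf {x : ℝ | ∃ m : ℕ, 1 ≤ m ∧ x = GammaF l r n m h}

/-- The set whose supremum is `K = sup_{n ≥ 1} sup_{h ∈ [0, l_n]} inf_{m ≥ 1} Γ_{nm}(h)`. -/
def KSetF (l r : ℕ → ℝ) : Set ℝ :=
  {x : ℝ | ∃ n : ℕ, 1 ≤ n ∧ ∃ h : ℝ, 0 ≤ h ∧ h ≤ l n ∧ x = infGammaF l r n h}

open Real Finset Filter

lemma ppart_nonneg (x : ℝ) : 0 ≤ ppart x := le_max_right x 0

lemma ppart_eq_zero {x : ℝ} (hx : x ≤ 0) : ppart x = 0 := max_eq_right hx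

lemma ppart_eq_self {x : ℝ} (hx : 0 ≤ x) : ppart x = x := max_eq_left hx

lemma two_mul_le_exp (x : ℝ) : 2 * x ≤ exp x := by
  have hsq : exp x = exp (x / 2) ^ 2 := by rw [← exp_nat_mul]; ring_nf
  nlinarith [add_one_le_exp (x / 2), exp_pos (x / 2), sq_nonneg (x / 2 - 1)]

lemma ppart_le_exp_mul {a b ρ h : ℝ} (h0 : 0 ≤ h) (ha : a ≤ h) :
    ppart (ρ + h - b) ≤
      exp h * (exp (-a) + exp (-b) + exp (-(1/2) * ppart (a + b - ρ)) + ppart (ρ - a - b)) := by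
  have hea := exp_pos (-a)
  have heb := exp_pos (-b)
  have heh := exp_pos h
  have hec := exp_pos (-(1/2) * ppart (a + b - ρ))
  rcases le_or_gt (ρ + h - b) 0 with hneg | hpos
  · rw [ppart_eq_zero hneg]
    nlinarith [ppart_nonneg (ρ - a - b)]
  rw [ppart_eq_self hpos.le]
  rcases le_or_gt (a + b) ρ with hlong | hshort
  · -- `ρ + h - b = (ρ - a - b) + (a + h)` with `a + h ≤ 2h ≤ e^h`
    rw [ppart_eq_zero (x := a + b - ρ) (by linarith), ppart_eq_self (x := ρ - a - b) (by linarith),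
      mul_zero, exp_zero]
    nlinarith [two_mul_le_exp h, one_le_exp h0, mul_pos heh hea, mul_pos heh heb]
  · rw [ppart_eq_self (x := a + b - ρ) (by linarith), ppart_eq_zero (x := ρ - a - b) (by linarith)]
    have hmid : ρ + h - b ≤ exp h * exp (-(1/2) * (a + b - ρ)) := by
      rw [← exp_add]
      calc ρ + h - b ≤ exp ((ρ + h - b) / 2) := by linarith [two_mul_le_exp ((ρ + h - b) / 2)]
        _ ≤ exp (h + -(1/2) * (a + b - ρ)) := exp_le_exp.2 (by linarith)
    nlinarith [mul_pos heh hea, mul_pos heh heb]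

section Delta

variable (l r : ℕ → ℝ)

lemma deltaF_nonneg (k : ℕ) : 0 ≤ DeltaF l r k := by
  unfold DeltaF
  linarith [exp_pos (-l k), exp_pos (-l (k + 1)),
    exp_pos (-(1/2) * ppart (l k + l (k + 1) - r k)), ppart_nonneg (r k - l k - l (k + 1))]

lemma exp_neg_le_deltaF (k : ℕ) : exp (-l k) ≤ DeltaF l r k := by
  unfold DeltaF
  linarith [exp_pos (-l (k + 1)),
    exp_pos (-(1/2) * ppart (l k + l (k + 1) - r k)), ppart_nonneg (r k - l k - l (k + 1))]

variable {l r}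

lemma ppart_le_exp_mul_deltaF_of_le {k : ℕ} {h : ℝ} (h0 : 0 ≤ h) (hk : l k ≤ h) :
    ppart (r k + h - l (k + 1)) ≤ exp h * DeltaF l r k :=
  ppart_le_exp_mul h0 hk

lemma ppart_le_exp_mul_deltaF_of_succ_le {k : ℕ} {h : ℝ} (h0 : 0 ≤ h) (hk : l (k + 1) ≤ h) :
    ppart (r k + h - l k) ≤ exp h * DeltaF l r k := by
  have := ppart_le_exp_mul (ρ := r k) (b := l k) h0 hk
  unfold DeltaF
  rw [add_comm (l (k + 1)), sub_sub, add_comm (l (k + 1)), ← sub_sub] at this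
  linarith

lemma sum_deltaF_mono {s t : Finset ℕ} (hst : s ⊆ t) :
    ∑ k ∈ s, DeltaF l r k ≤ ∑ k ∈ t, DeltaF l r k :=
  sum_le_sum_of_subset_of_nonneg hst fun k _ _ ↦ deltaF_nonneg l r k

end Delta

section Gamma

variable {l r : ℕ → ℝ} {n m : ℕ} {h : ℝ}

lemma gammaF_of_lt_of_le (hmn : m < n) (hm : l m ≤ h) :
    GammaF l r n m h =
      ppart (r m + h - l (m + 1)) + exp h * ∑ k ∈ Icc (m + 1) (n - 1), DeltaF l r k := by
  simp only [GammaF, if_pos hmn, if_pos hm]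

lemma gammaF_of_gt_of_le (hnm : n < m) (hm : l m ≤ h) :
    GammaF l r n m h =
      ppart (r (m - 1) + h - l (m - 1)) + exp h * ∑ k ∈ Icc n (m - 2), DeltaF l r k := by
  simp only [GammaF, if_neg (not_lt.2 hnm.le), if_neg hnm.ne', if_pos hm]

lemma exp_mul_sum_deltaF_le_gammaF_of_lt (hmn : m < n) :
    exp h * ∑ k ∈ Icc (m + 1) (n - 1), DeltaF l r k ≤ GammaF l r n m h := by
  by_cases hm : l m ≤ h
  · rw [gammaF_of_lt_of_le hmn hm]
    linarith [ppart_nonneg (r m + h - l (m + 1))]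
  · have hsub := mul_le_mul_of_nonneg_left
      (sum_deltaF_mono (l := l) (r := r) (Icc_subset_Icc_left (Nat.le_succ m) (b := n - 1)))
      (exp_pos h).le
    simp only [GammaF, if_pos hmn, if_neg hm]
    linarith [not_le.1 hm]

lemma exp_mul_sum_deltaF_le_gammaF_of_gt (hnm : n < m) :
    exp h * ∑ k ∈ Icc n (m - 2), DeltaF l r k ≤ GammaF l r n m h := by
  by_cases hm : l m ≤ h
  · rw [gammaF_of_gt_of_le hnm hm]
    linarith [ppart_nonneg (r (m - 1) + h - l (m - 1))]
  · have hsub := mul_le_mul_of_nonneg_left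
      (sum_deltaF_mono (l := l) (r := r) (Icc_subset_Icc_right (by omega : m - 2 ≤ m - 1)
        (a := n))) (exp_pos h).le
    simp only [GammaF, if_neg (not_lt.2 hnm.le), if_neg hnm.ne', if_neg hm]
    linarith [not_le.1 hm]

lemma sub_le_gammaF (hnm : n < m) (hm : h < l m) : l m - h ≤ GammaF l r n m h := by
  simp only [GammaF, if_neg (not_lt.2 hnm.le), if_neg hnm.ne', if_neg (not_le.2 hm)]
  linarith [mul_nonneg (exp_pos h).le (sum_nonneg fun k (_ : k ∈ Icc n (m - 1)) ↦
    deltaF_nonneg l r k)]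

lemma sum_exp_neg_le_gammaF (h0 : 0 ≤ h) (hnm : n < m) :
    ∑ k ∈ Ico n (m - 1), exp (-l k) ≤ GammaF l r n m h :=
  calc ∑ k ∈ Ico n (m - 1), exp (-l k)
      ≤ ∑ k ∈ Icc n (m - 2), DeltaF l r k :=
        (sum_le_sum fun k _ ↦ exp_neg_le_deltaF l r k).trans
          (sum_deltaF_mono fun k hk ↦ by simp only [mem_Ico, mem_Icc] at hk ⊢; omega)
    _ ≤ exp h * ∑ k ∈ Icc n (m - 2), DeltaF l r k :=
        le_mul_of_one_le_left (sum_nonneg fun k _ ↦ deltaF_nonneg l r k) (one_le_exp h0)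
    _ ≤ GammaF l r n m h := exp_mul_sum_deltaF_le_gammaF_of_gt hnm

lemma gammaF_le_of_lt_of_le {a : ℕ} (h0 : 0 ≤ h) (han : a < n) (ha : l a ≤ h) (hma : m < a) :
    GammaF l r n a h ≤ GammaF l r n m h := by
  have hsplit : ∑ k ∈ Icc a (n - 1), DeltaF l r k =
      DeltaF l r a + ∑ k ∈ Icc (a + 1) (n - 1), DeltaF l r k := by
    rw [Icc_add_one_left_eq_Ioc, add_sum_Ioc_eq_sum_Icc (by omega)]
  have hmono : ∑ k ∈ Icc a (n - 1), DeltaF l r k ≤ ∑ k ∈ Icc (m + 1) (n - 1), DeltaF l r k :=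
    sum_deltaF_mono (Icc_subset_Icc_left hma)
  rw [gammaF_of_lt_of_le han ha]
  refine le_trans ?_ (exp_mul_sum_deltaF_le_gammaF_of_lt (hma.trans han))
  nlinarith [ppart_le_exp_mul_deltaF_of_le (r := r) h0 ha, exp_pos h]

lemma gammaF_le_of_gt_of_le {b : ℕ} (hn : 1 ≤ n) (h0 : 0 ≤ h) (hnb : n < b) (hb : l b ≤ h)
    (hbm : b < m) : GammaF l r n b h ≤ GammaF l r n m h := by
  -- `n ≥ 1` makes `b ≥ 2`, so the truncated `b - 2` in `Γ_{nb}` is one less than `b - 1`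
  obtain ⟨c, rfl⟩ : ∃ c, b = c + 2 := ⟨b - 2, by omega⟩
  have hsplit : ∑ k ∈ Icc n (c + 1), DeltaF l r k =
      ∑ k ∈ Icc n c, DeltaF l r k + DeltaF l r (c + 1) :=
    sum_Icc_succ_top (by omega) _
  have hmono : ∑ k ∈ Icc n (c + 1), DeltaF l r k ≤ ∑ k ∈ Icc n (m - 2), DeltaF l r k :=
    sum_deltaF_mono (Icc_subset_Icc_right (by omega))
  rw [gammaF_of_gt_of_le hnb hb, show c + 2 - 1 = c + 1 by omega, Nat.add_sub_cancel]
  refine le_trans ?_ (exp_mul_sum_deltaF_le_gammaF_of_gt (hnb.trans hbm))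
  nlinarith [ppart_le_exp_mul_deltaF_of_succ_le (r := r) (k := c + 1) h0 hb, exp_pos h]

variable (l r n) in
theorem tendsto_gammaF_atTop (h0 : 0 ≤ h) :
    Tendsto (fun m ↦ GammaF l r n m h) atTop atTop := by
  by_cases hs : Summable fun k ↦ exp (-l k)
  · have hl : Tendsto l atTop atTop :=
      tendsto_neg_atBot_iff.1 (tendsto_exp_comp_nhds_zero.1 hs.tendsto_atTop_zero)
    refine tendsto_atTop_mono' _ ?_ (tendsto_atTop_add_const_right _ (-h) hl)
    filter_upwards [eventually_gt_atTop n, hl.eventually_gt_atTop h] with m hnm hm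
    exact sub_le_gammaF hnm hm
  · have hP := (not_summable_iff_tendsto_nat_atTop_of_nonneg fun k ↦ (exp_pos (-l k)).le).1 hs
    refine tendsto_atTop_mono' _ ?_ ((tendsto_atTop_add_const_right _
      (-∑ k ∈ range n, exp (-l k)) hP).comp (tendsto_sub_atTop_nat 1))
    filter_upwards [eventually_gt_atTop n] with m hnm
    rw [Function.comp_apply, ← sub_eq_add_neg, ← sum_Ico_eq_sub _ (by omega)]
    exact sum_exp_neg_le_gammaF h0 hnm

variable (l r n) in
theorem exists_forall_gammaF_le (h0 : 0 ≤ h) :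
    ∃ m₀, 1 ≤ m₀ ∧ ∀ m, 1 ≤ m → GammaF l r n m₀ h ≤ GammaF l r n m h := by
  have hlim := tendsto_gammaF_atTop l r n h0
  rw [← Nat.cofinite_eq_atTop] at hlim
  exact hlim.exists_within_forall_le (s := Set.Ici 1) Set.nonempty_Ici

end Gamma

section Records

variable {l : ℕ → ℝ} {n : ℕ} {h : ℝ}

lemma aFun_mem : AFun l n h = 1 ∨ (1 ≤ AFun l n h ∧ AFun l n h < n ∧ l (AFun l n h) ≤ h) := by
  have hbdd : BddAbove ({1} ∪ {m : ℕ | 1 ≤ m ∧ m < n ∧ l m ≤ h}) := by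
    refine ⟨n + 1, ?_⟩
    rintro m (hm | ⟨-, hmn, -⟩)
    · rw [Set.mem_singleton_iff.1 hm]; omega
    · omega
  exact Nat.sSup_mem ⟨1, Or.inl rfl⟩ hbdd

lemma one_le_aFun : 1 ≤ AFun l n h := by
  rcases aFun_mem (l := l) (n := n) (h := h) with hA | ⟨hA, -⟩ <;> omega

lemma aFun_le_bFun (hn : 1 ≤ n) : (AFun l n h : ℕ∞) ≤ BFun l n h := by
  have hAn : AFun l n h ≤ n := by
    rcases aFun_mem (l := l) (n := n) (h := h) with hA | ⟨-, hA, -⟩ <;> omega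
  refine le_sInf ?_
  rintro _ ⟨m, rfl, hnm, -⟩
  exact_mod_cast hAn.trans hnm.le

lemma exists_eq_bFun (hB : BFun l n h < ⊤) : ∃ b : ℕ, BFun l n h = b ∧ n < b ∧ l b ≤ h := by
  have hne : {x : ℕ∞ | ∃ m : ℕ, x = (m : ℕ∞) ∧ n < m ∧ l m ≤ h}.Nonempty := by
    by_contra hemp
    rw [Set.not_nonempty_iff_eq_empty] at hemp
    simp [BFun, hemp] at hB
  obtain ⟨b, hb, hnb, hlb⟩ := csInf_mem hne
  exact ⟨b, hb, hnb, hlb⟩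

end Records

theorem stmt2_general (l r : ℕ → ℝ)
    (n : ℕ) (hn : 1 ≤ n) (h : ℝ) (h0 : 0 ≤ h) :
    ∃ m₀ : ℕ, 1 ≤ m₀ ∧ AFun l n h ≤ m₀ ∧ (m₀ : ℕ∞) ≤ BFun l n h ∧
      ∀ m : ℕ, 1 ≤ m → GammaF l r n m₀ h ≤ GammaF l r n m h := by
  obtain ⟨m₁, hm₁, hmin⟩ := exists_forall_gammaF_le l r n h0
  by_cases hA : m₁ < AFun l n h
  · obtain ⟨-, hAn, hlA⟩ := (aFun_mem (l := l) (n := n) (h := h)).resolve_left (by omega)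
    exact ⟨AFun l n h, one_le_aFun, le_rfl, aFun_le_bFun hn,
      fun m hm ↦ (gammaF_le_of_lt_of_le h0 hAn hlA hA).trans (hmin m hm)⟩
  by_cases hB : (m₁ : ℕ∞) ≤ BFun l n h
  · exact ⟨m₁, hm₁, not_lt.1 hA, hB, hmin⟩
  obtain ⟨b, hb, hnb, hlb⟩ := exists_eq_bFun ((not_le.1 hB).trans (ENat.natCast_lt_top m₁))
  have hbm : b < m₁ := by exact_mod_cast hb ▸ not_le.1 hB
  have hAb : AFun l n h ≤ b := by exact_mod_cast hb ▸ aFun_le_bFun hn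
  exact ⟨b, by omega, hAb, hb.ge,
    fun m hm ↦ (gammaF_le_of_gt_of_le hn h0 hnb hlb hbm).trans (hmin m hm)⟩

/-- For every integer `n ≥ 1` and every real `h` with `0 ≤ h ≤ l_n`, the infimum of
`Γ_{nm}(h)` over integers `m ≥ 1` is attained, and it equals the minimum of `Γ_{nm}(h)` over
integers `m` with `A_n(h) ≤ m ≤ B_n(h)`. -/
theorem stmt2 (l r : ℕ → ℝ) (hl : ∀ n : ℕ, 1 ≤ n → 0 < l n) (hr : ∀ n : ℕ, 1 ≤ n → 0 ≤ r n)
    (n : ℕ) (hn : 1 ≤ n) (h : ℝ) (h0 : 0 ≤ h) (hln : h ≤ l n) :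
    ∃ m₀ : ℕ, 1 ≤ m₀ ∧ AFun l n h ≤ m₀ ∧ (m₀ : ℕ∞) ≤ BFun l n h ∧
      ∀ m : ℕ, 1 ≤ m → GammaF l r n m₀ h ≤ GammaF l r n m h :=
  stmt2_general l r n hn h h0
end

section
/- For all reals a, x ≥ 0 with a ≤ 1, one has (sinh a · cosh x)/sinh 1 ≤ a e^x; for all reals a ≥ 1 and x ≥ 0, one has log(sinh a · cosh x) ≤ a e^x; and for all reals a, x ≥ 0, one has a e^x ≤ 2 sinh a · cosh x. -/
open Real

lemma sinh_le_mul_sinh_one {a : ℝ} (h0 : 0 ≤ a) (h1 : a ≤ 1) :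
    Real.sinh a ≤ a * Real.sinh 1 := by
  have hconv : ConvexOn ℝ (Set.Icc (0:ℝ) 1) Real.sinh := by
    apply convexOn_of_deriv2_nonneg (convex_Icc 0 1)
    · exact Real.continuous_sinh.continuousOn
    · exact Real.differentiable_sinh.differentiableOn
    · rw [Real.deriv_sinh]; exact Real.differentiable_cosh.differentiableOn
    · intro x hx
      rw [Function.iterate_succ_apply', Function.iterate_one, Real.deriv_sinh,
        Real.deriv_cosh]
      rw [interior_Icc] at hx
      exact Real.sinh_nonneg_iff.2 hx.1.le
  have := hconv.2 (Set.left_mem_Icc.2 zero_le_one) (Set.right_mem_Icc.2 zero_le_one)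
    (by linarith : (0:ℝ) ≤ 1 - a) h0 (by ring)
  simpa [Real.sinh_zero] using this

lemma cosh_le_exp' (x : ℝ) (hx : 0 ≤ x) : Real.cosh x ≤ Real.exp x := by
  rw [Real.cosh_eq]
  have h1 : Real.exp (-x) ≤ Real.exp x := Real.exp_le_exp.2 (by linarith)
  linarith

/-- For all reals `a, x ≥ 0` with `a ≤ 1`, `(sinh a · cosh x)/sinh 1 ≤ a e^x`;
for all reals `a ≥ 1` and `x ≥ 0`, `log (sinh a · cosh x) ≤ a e^x`;
and for all reals `a, x ≥ 0`, `a e^x ≤ 2 sinh a · cosh x`. -/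
theorem stmt6 :
    (∀ a x : ℝ, 0 ≤ a → a ≤ 1 → 0 ≤ x →
      Real.sinh a * Real.cosh x / Real.sinh 1 ≤ a * Real.exp x) ∧
    (∀ a x : ℝ, 1 ≤ a → 0 ≤ x →
      Real.log (Real.sinh a * Real.cosh x) ≤ a * Real.exp x) ∧
    (∀ a x : ℝ, 0 ≤ a → 0 ≤ x →
      a * Real.exp x ≤ 2 * (Real.sinh a * Real.cosh x)) := by
  refine ⟨?_, ?_, ?_⟩
  · intro a x ha ha1 hx
    have hs1 : 0 < Real.sinh 1 := Real.sinh_pos_iff.2 one_pos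
    rw [div_le_iff₀ hs1]
    have h1 : Real.sinh a ≤ a * Real.sinh 1 := sinh_le_mul_sinh_one ha ha1
    have h2 : Real.cosh x ≤ Real.exp x := cosh_le_exp' x hx
    have hc : 0 < Real.cosh x := Real.cosh_pos x
    nlinarith [mul_le_mul_of_nonneg_right h1 hc.le, mul_le_mul_of_nonneg_left h2 (mul_nonneg ha hs1.le)]
  · intro a x ha hx
    have hsa : 0 < Real.sinh a := Real.sinh_pos_iff.2 (by linarith)
    have hc : 0 < Real.cosh x := Real.cosh_pos x
    have h1 : Real.sinh a ≤ Real.exp a := by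
      rw [Real.sinh_eq]; have := (Real.exp_pos (-a)).le; have := (Real.exp_pos a).le; linarith
    have h2 : Real.cosh x ≤ Real.exp x := cosh_le_exp' x hx
    have h3 : Real.sinh a * Real.cosh x ≤ Real.exp (a + x) := by
      rw [Real.exp_add]
      exact mul_le_mul h1 h2 hc.le (Real.exp_pos a).le
    have h4 : Real.log (Real.sinh a * Real.cosh x) ≤ a + x := by
      calc Real.log (Real.sinh a * Real.cosh x) ≤ Real.log (Real.exp (a + x)) :=
            Real.log_le_log (by positivity) h3
        _ = a + x := Real.log_exp _
    have h5 : 1 + x ≤ Real.exp x := by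
      have := Real.add_one_le_exp x; linarith
    nlinarith
  · intro a x ha hx
    have h1 : a ≤ Real.sinh a := by
      rcases eq_or_lt_of_le ha with h | h
      · simp [← h]
      · exact (Real.self_lt_sinh_iff.2 h).le
    have h2 : Real.exp x ≤ 2 * Real.cosh x := by
      rw [Real.cosh_eq]; have := (Real.exp_pos (-x)).le; linarith
    nlinarith [Real.exp_pos x, Real.cosh_pos (x := x), Real.sinh_nonneg_iff.2 ha]
end

section
/- There exists a universal constant c₁ > 0 with the following property: for all reals x, y > 0 and t ≥ 0, if f ≥ 0 is the unique nonnegative real with cosh f = (cosh t + cosh x · cosh y)/(sinh x · sinh y), then f ≥ c₁ · (e^{-x} + e^{-y} + e^{-(1/2)(x + y - t)_+} + (t - x - y)_+). -/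
open Real

namespace Real

lemma log_one_add_le_of_le_sinh {u s : ℝ} (hu : -1 < u) (h : u ≤ sinh s) : log (1 + u) ≤ s := by
  rw [log_le_iff_le_exp (by linarith), ← cosh_add_sinh]
  linarith [one_le_cosh s]

lemma half_le_log_one_add {u : ℝ} (hu₀ : 0 ≤ u) (hu₁ : u ≤ 1) : u / 2 ≤ log (1 + u) := by
  have hpos : 0 < 1 + u := by linarith
  calc u / 2 ≤ u / (1 + u) := div_le_div_of_nonneg_left hu₀ hpos (by linarith)
    _ = 1 - (1 + u)⁻¹ := by field_simp; ring
    _ ≤ log (1 + u) := one_sub_inv_le_log_of_pos hpos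

lemma two_mul_sinh_half_sq (f : ℝ) : 2 * sinh (f / 2) ^ 2 = cosh f - 1 := by
  rw [show f = 2 * (f / 2) by ring, cosh_two_mul, cosh_sq']
  ring_nf

lemma sinh_le_exp_div_two (x : ℝ) : sinh x ≤ exp x / 2 := by
  rw [sinh_eq]
  linarith [exp_pos (-x)]

lemma two_mul_log_one_add_le_of_sq_le_sinh_half_sq {u f : ℝ} (hu : 0 ≤ u) (hf : 0 ≤ f)
    (h : u ^ 2 ≤ sinh (f / 2) ^ 2) : 2 * log (1 + u) ≤ f := by
  have hs : 0 ≤ sinh (f / 2) := sinh_nonneg_iff.mpr (by linarith)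
  have := log_one_add_le_of_le_sinh (by linarith) ((pow_le_pow_iff_left₀ hu hs two_ne_zero).mp h)
  linarith

lemma le_of_sq_le_sinh_half_sq {u f : ℝ} (hu₀ : 0 ≤ u) (hu₁ : u ≤ 1) (hf : 0 ≤ f)
    (h : u ^ 2 ≤ sinh (f / 2) ^ 2) : u ≤ f := by
  linarith [half_le_log_one_add hu₀ hu₁, two_mul_log_one_add_le_of_sq_le_sinh_half_sq hu₀ hf h]

end Real

lemma exp_sub_add_exp_neg_sq_add_exp_neg_sq_le_sinh_half_sq {x y t f : ℝ} (hx : 0 < x)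
    (hy : 0 < y) (h : cosh f = (cosh t + cosh x * cosh y) / (sinh x * sinh y)) :
    exp (t - x - y) + exp (-x) ^ 2 + exp (-y) ^ 2 ≤ sinh (f / 2) ^ 2 := by
  have hsy : 0 < sinh y := sinh_pos_iff.mpr hy
  have hS : 0 < sinh x * sinh y := mul_pos (sinh_pos_iff.mpr hx) hsy
  have hcosh_sub_one : cosh f - 1 = (cosh t + cosh (x - y)) / (sinh x * sinh y) := by
    rw [h, cosh_sub]; field_simp; ring
  have hS_le : sinh x * sinh y ≤ exp (x + y) / 4 :=
    calc sinh x * sinh y ≤ (exp x / 2) * (exp y / 2) :=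
          mul_le_mul (sinh_le_exp_div_two x) (sinh_le_exp_div_two y) hsy.le (by positivity)
      _ = exp (x + y) / 4 := by rw [exp_add]; ring
  have hcosh_t : exp t / 2 ≤ cosh t := by rw [cosh_eq]; linarith [exp_pos (-t)]
  have hlower : 2 * (exp (t - x - y) + exp (-x) ^ 2 + exp (-y) ^ 2)
      ≤ (cosh t + cosh (x - y)) / (exp (x + y) / 4) := by
    rw [le_div_iff₀ (by positivity), cosh_eq (x - y), neg_sub]
    have e1 : exp (t - x - y) * exp (x + y) = exp t := by rw [← exp_add]; ring_nf
    have e2 : exp (-x) ^ 2 * exp (x + y) = exp (y - x) := by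
      rw [← exp_nat_mul, ← exp_add]; ring_nf
    have e3 : exp (-y) ^ 2 * exp (x + y) = exp (x - y) := by
      rw [← exp_nat_mul, ← exp_add]; ring_nf
    nlinarith
  have hdiv := div_le_div_of_nonneg_left (a := cosh t + cosh (x - y)) (by positivity) hS hS_le
  linarith [two_mul_sinh_half_sq f]

lemma exp_neg_half_ppart_neg_add_ppart_le (d : ℝ) :
    exp (-(1/2) * ppart (-d)) + ppart d ≤ 4 * log (1 + exp (d / 2)) := by
  rcases le_total d 0 with hd | hd
  · rw [ppart, ppart, max_eq_left (by linarith), max_eq_right hd,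
      show -(1/2) * -d = d / 2 by ring]
    have := half_le_log_one_add (exp_pos _).le (exp_le_one_iff.mpr (by linarith) : exp (d / 2) ≤ 1)
    linarith [exp_pos (d / 2)]
  · rw [ppart, ppart, max_eq_right (by linarith), max_eq_left hd, mul_zero, exp_zero]
    have hlog2 : log 2 ≤ log (1 + exp (d / 2)) :=
      log_le_log two_pos (by linarith [one_le_exp (show 0 ≤ d / 2 by linarith)])
    have hlogd : d / 2 ≤ log (1 + exp (d / 2)) := by
      rw [le_log_iff_exp_le (by positivity)]; linarith
    linarith [log_two_gt_d9]

/-- There exists a universal constant `c₁ > 0` such that for all reals `x, y > 0` and `t ≥ 0`: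
if `f ≥ 0` is the unique nonnegative real with
`cosh f = (cosh t + cosh x · cosh y)/(sinh x · sinh y)`, then
`f ≥ c₁ (e^{-x} + e^{-y} + e^{-(1/2)(x + y - t)₊} + (t - x - y)₊)`. -/
theorem stmt8 :
    ∃ c₁ : ℝ, 0 < c₁ ∧ ∀ x y t f : ℝ, 0 < x → 0 < y → 0 ≤ t → 0 ≤ f →
      Real.cosh f = (Real.cosh t + Real.cosh x * Real.cosh y) / (Real.sinh x * Real.sinh y) →
      c₁ * (Real.exp (-x) + Real.exp (-y) + Real.exp (-(1/2) * ppart (x + y - t)) +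
        ppart (t - x - y)) ≤ f := by
  refine ⟨1/4, by norm_num, fun x y t f hx hy _ hf hcosh => ?_⟩
  have hsq := exp_sub_add_exp_neg_sq_add_exp_neg_sq_le_sinh_half_sq hx hy hcosh
  have hexp_t := exp_pos (t - x - y)
  have hx_le : exp (-x) ≤ f :=
    le_of_sq_le_sinh_half_sq (exp_pos _).le (exp_le_one_iff.mpr (by linarith)) hf (by nlinarith)
  have hy_le : exp (-y) ≤ f :=
    le_of_sq_le_sinh_half_sq (exp_pos _).le (exp_le_one_iff.mpr (by linarith)) hf (by nlinarith)
  have ht_le : 2 * log (1 + exp ((t - x - y) / 2)) ≤ f := by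
    refine two_mul_log_one_add_le_of_sq_le_sinh_half_sq (exp_pos _).le hf ?_
    rw [← exp_nat_mul, show ((2 : ℕ) : ℝ) * ((t - x - y) / 2) = t - x - y by push_cast; ring]
    nlinarith
  have hppart := exp_neg_half_ppart_neg_add_ppart_le (t - x - y)
  rw [show -(t - x - y) = x + y - t by ring] at hppart
  linarith
end

section
/- For each l₀ > 0 there exists a constant c₂, depending only on l₀, with the following property: for all reals t ≥ 0 and x, y ≥ l₀, if f ≥ 0 is the unique nonnegative real with cosh f = (cosh t + cosh x · cosh y)/(sinh x · sinh y), then f ≤ c₂ · (e^{-x} + e^{-y} + e^{-(1/2)(x + y - t)_+} + (t - x - y)_+). -/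
private lemma sq_le_imp {a b : ℝ} (ha : 0 ≤ a) (hb : 0 ≤ b) (h : a ^ 2 ≤ b ^ 2) : a ≤ b := by
  nlinarith

/-- For each `l₀ > 0` there exists a constant `c₂`, depending only on `l₀`, such that for all
reals `t ≥ 0` and `x, y ≥ l₀`: if `f ≥ 0` is the unique nonnegative real with
`cosh f = (cosh t + cosh x · cosh y)/(sinh x · sinh y)`, then
`f ≤ c₂ (e^{-x} + e^{-y} + e^{-(1/2)(x + y - t)₊} + (t - x - y)₊)`. -/
theorem stmt9 (l₀ : ℝ) (hl₀ : 0 < l₀) :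
    ∃ c₂ : ℝ, ∀ x y t f : ℝ, l₀ ≤ x → l₀ ≤ y → 0 ≤ t → 0 ≤ f →
      Real.cosh f = (Real.cosh t + Real.cosh x * Real.cosh y) / (Real.sinh x * Real.sinh y) →
      f ≤ c₂ * (Real.exp (-x) + Real.exp (-y) + Real.exp (-(1/2) * ppart (x + y - t)) +
        ppart (t - x - y)) := by
  obtain ⟨c, hc, hc2, hsinhc⟩ : ∃ c : ℝ, 0 < c ∧ c < 1 / 2 ∧
      ∀ z : ℝ, l₀ ≤ z → c * Real.exp z ≤ Real.sinh z := by
    refine ⟨(1 - Real.exp (-(2 * l₀))) / 2, ?_, ?_, ?_⟩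
    · have : Real.exp (-(2 * l₀)) < 1 := Real.exp_lt_one_iff.mpr (by linarith)
      linarith
    · have : 0 < Real.exp (-(2 * l₀)) := Real.exp_pos _
      linarith
    · intro z hz
      rw [Real.sinh_eq]
      have h1 : Real.exp (-z) ≤ Real.exp (z - 2 * l₀) := Real.exp_le_exp.mpr (by linarith)
      have h2 : Real.exp (z - 2 * l₀) = Real.exp (-(2 * l₀)) * Real.exp z := by
        rw [← Real.exp_add]; ring_nf
      nlinarith [Real.exp_pos z]
  have hA : (0:ℝ) ≤ Real.log (4 / c ^ 2) := by
    apply Real.log_nonneg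
    rw [le_div_iff₀ (by positivity)]
    nlinarith
  have hsq2 : (0:ℝ) ≤ Real.sqrt 2 / c := by positivity
  refine ⟨Real.sqrt 2 / c + Real.log (4 / c ^ 2) + 1, ?_⟩
  intro x y t f hx hy ht hf hcosh
  have hx0 : 0 < x := lt_of_lt_of_le hl₀ hx
  have hy0 : 0 < y := lt_of_lt_of_le hl₀ hy
  have hcoshexp : ∀ z : ℝ, 0 ≤ z → Real.cosh z ≤ Real.exp z := by
    intro z hz
    rw [Real.cosh_eq]
    have : Real.exp (-z) ≤ Real.exp z := Real.exp_le_exp.mpr (by linarith)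
    linarith
  have hsx := hsinhc x hx
  have hsy := hsinhc y hy
  have hsx0 : 0 < Real.sinh x := lt_of_lt_of_le (by positivity) hsx
  have hsy0 : 0 < Real.sinh y := lt_of_lt_of_le (by positivity) hsy
  have hS : 0 < Real.sinh x * Real.sinh y := mul_pos hsx0 hsy0
  have hSe : c * Real.exp x * (c * Real.exp y) ≤ Real.sinh x * Real.sinh y :=
    mul_le_mul hsx hsy (by positivity) (le_of_lt hsx0)
  have hcosh' : Real.cosh f * (Real.sinh x * Real.sinh y)
      = Real.cosh t + Real.cosh x * Real.cosh y := by
    field_simp at hcosh; linarith [hcosh]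
  have hct : Real.cosh t ≤ Real.exp t := hcoshexp t ht
  have hpxy : 0 < Real.exp x * Real.exp y := mul_pos (Real.exp_pos x) (Real.exp_pos y)
  rcases le_or_gt t (x + y) with hcase | hcase
  · -- case t ≤ x + y : quadratic bound
    have hfsq : f ^ 2 / 2 ≤ Real.cosh f - 1 := by
      have h1 : Real.cosh f = 2 * Real.sinh (f / 2) ^ 2 + 1 := by
        rw [show f = 2 * (f / 2) by ring, Real.cosh_two_mul, Real.cosh_sq]; ring_nf
      have h2 : f / 2 ≤ Real.sinh (f / 2) := Real.self_le_sinh_iff.mpr (by linarith)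
      nlinarith
    have hkey : (Real.cosh f - 1) * (Real.sinh x * Real.sinh y)
        = Real.cosh t + Real.cosh (x - y) := by
      rw [Real.cosh_sub]; linarith [hcosh']
    have hcxy : Real.cosh (x - y) ≤ Real.exp (x - y) + Real.exp (y - x) := by
      rw [Real.cosh_eq, show -(x - y) = y - x by ring]
      linarith [Real.exp_pos (x - y), Real.exp_pos (y - x)]
    have hD0 : 0 ≤ Real.cosh f - 1 := by linarith [Real.one_le_cosh f]
    have hDS : (Real.cosh f - 1) * (c * Real.exp x * (c * Real.exp y))
        ≤ Real.exp t + Real.exp (x - y) + Real.exp (y - x) := by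
      calc (Real.cosh f - 1) * (c * Real.exp x * (c * Real.exp y))
          ≤ (Real.cosh f - 1) * (Real.sinh x * Real.sinh y) :=
            mul_le_mul_of_nonneg_left hSe hD0
        _ = Real.cosh t + Real.cosh (x - y) := hkey
        _ ≤ Real.exp t + Real.exp (x - y) + Real.exp (y - x) := by linarith
    set a := Real.exp ((t - x - y) / 2) with ha
    set b := Real.exp (-x) with hb
    set d := Real.exp (-y) with hd
    have ha0 : 0 < a := Real.exp_pos _
    have hb0 : 0 < b := Real.exp_pos _
    have hd0 : 0 < d := Real.exp_pos _
    set E := a + b + d with hE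
    have hEpos : 0 < E := by positivity
    have hup : Real.exp t + Real.exp (x - y) + Real.exp (y - x)
        ≤ E ^ 2 * (Real.exp x * Real.exp y) := by
      have e1 : Real.exp t = a ^ 2 * (Real.exp x * Real.exp y) := by
        rw [ha, sq, ← Real.exp_add, ← Real.exp_add, ← Real.exp_add]; ring_nf
      have e2 : Real.exp (x - y) = d ^ 2 * (Real.exp x * Real.exp y) := by
        rw [hd, sq, ← Real.exp_add, ← Real.exp_add, ← Real.exp_add]; ring_nf
      have e3 : Real.exp (y - x) = b ^ 2 * (Real.exp x * Real.exp y) := by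
        rw [hb, sq, ← Real.exp_add, ← Real.exp_add, ← Real.exp_add]; ring_nf
      have hcross : a ^ 2 + d ^ 2 + b ^ 2 ≤ E ^ 2 := by
        have hid : E ^ 2 = a ^ 2 + d ^ 2 + b ^ 2 + 2*(a*b) + 2*(a*d) + 2*(b*d) := by
          rw [hE]; ring
        have h1 : 0 < a * b := mul_pos ha0 hb0
        have h2 : 0 < a * d := mul_pos ha0 hd0
        have h3 : 0 < b * d := mul_pos hb0 hd0
        linarith
      calc Real.exp t + Real.exp (x - y) + Real.exp (y - x)
          = (a ^ 2 + d ^ 2 + b ^ 2) * (Real.exp x * Real.exp y) := by rw [e1, e2, e3]; ring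
        _ ≤ E ^ 2 * (Real.exp x * Real.exp y) :=
            mul_le_mul_of_nonneg_right hcross (le_of_lt hpxy)
    have hD : (Real.cosh f - 1) * c ^ 2 ≤ E ^ 2 := by
      have h1 : (Real.cosh f - 1) * c ^ 2 * (Real.exp x * Real.exp y)
          ≤ E ^ 2 * (Real.exp x * Real.exp y) := by
        calc (Real.cosh f - 1) * c ^ 2 * (Real.exp x * Real.exp y)
            = (Real.cosh f - 1) * (c * Real.exp x * (c * Real.exp y)) := by ring
          _ ≤ Real.exp t + Real.exp (x - y) + Real.exp (y - x) := hDS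
          _ ≤ E ^ 2 * (Real.exp x * Real.exp y) := hup
      exact le_of_mul_le_mul_right h1 hpxy
    have hfE : f ≤ Real.sqrt 2 / c * E := by
      have hs2 : Real.sqrt 2 ^ 2 = 2 := Real.sq_sqrt (by norm_num)
      apply sq_le_imp hf (by positivity)
      have hid : (Real.sqrt 2 / c * E) ^ 2 = Real.sqrt 2 ^ 2 * E ^ 2 / c ^ 2 := by ring
      rw [hid, hs2, le_div_iff₀ (by positivity)]
      have h2 : f ^ 2 / 2 * c ^ 2 ≤ (Real.cosh f - 1) * c ^ 2 :=
        mul_le_mul_of_nonneg_right hfsq (by positivity)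
      linarith
    have hp1 : ppart (x + y - t) = x + y - t := max_eq_left (by linarith)
    have hp2 : ppart (t - x - y) = 0 := max_eq_right (by linarith)
    rw [hp1, hp2]
    have hEeq : Real.exp (-(1/2) * (x + y - t)) = a := by
      rw [ha]; congr 1; ring
    rw [hEeq]
    have hid : (Real.sqrt 2 / c + Real.log (4 / c ^ 2) + 1) * (b + d + a + 0)
        = Real.sqrt 2 / c * E + (Real.log (4 / c ^ 2) + 1) * E := by rw [hE]; ring
    have hnn : 0 ≤ (Real.log (4 / c ^ 2) + 1) * E :=
      mul_nonneg (by linarith) (le_of_lt hEpos)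
    linarith
  · -- case t > x + y : log bound
    have hcc : Real.cosh x * Real.cosh y ≤ Real.exp x * Real.exp y :=
      mul_le_mul (hcoshexp x (le_of_lt hx0)) (hcoshexp y (le_of_lt hy0))
        (le_of_lt (Real.cosh_pos y)) (le_of_lt (Real.exp_pos x))
    have hexy : Real.exp x * Real.exp y ≤ Real.exp t := by
      rw [← Real.exp_add]; exact Real.exp_le_exp.mpr (by linarith)
    have het : Real.exp (t - x - y) * (Real.exp x * Real.exp y) = Real.exp t := by
      rw [← Real.exp_add, ← Real.exp_add]; ring_nf
    have hcf : Real.cosh f * c ^ 2 * (Real.exp x * Real.exp y)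
        ≤ 2 * Real.exp (t - x - y) * (Real.exp x * Real.exp y) := by
      have h0 : 0 < Real.cosh f := Real.cosh_pos f
      calc Real.cosh f * c ^ 2 * (Real.exp x * Real.exp y)
          = Real.cosh f * (c * Real.exp x * (c * Real.exp y)) := by ring
        _ ≤ Real.cosh f * (Real.sinh x * Real.sinh y) :=
            mul_le_mul_of_nonneg_left hSe (le_of_lt h0)
        _ = Real.cosh t + Real.cosh x * Real.cosh y := hcosh'
        _ ≤ 2 * Real.exp t := by linarith
        _ = 2 * Real.exp (t - x - y) * (Real.exp x * Real.exp y) := by rw [← het]; ring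
    have hcf2 : Real.cosh f * c ^ 2 ≤ 2 * Real.exp (t - x - y) :=
      le_of_mul_le_mul_right hcf hpxy
    have hef : Real.exp f ≤ 4 / c ^ 2 * Real.exp (t - x - y) := by
      have h1 : Real.exp f ≤ 2 * Real.cosh f := by
        rw [Real.cosh_eq]; linarith [Real.exp_pos (-f)]
      have h2 : Real.cosh f ≤ 2 * Real.exp (t - x - y) / c ^ 2 := by
        rw [le_div_iff₀ (by positivity)]; linarith
      have h3 : 2 * (2 * Real.exp (t - x - y) / c ^ 2) = 4 / c ^ 2 * Real.exp (t - x - y) := by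
        ring
      linarith
    have hflog : f ≤ Real.log (4 / c ^ 2) + (t - x - y) := by
      rw [← Real.exp_le_exp, Real.exp_add, Real.exp_log (by positivity)]
      exact hef
    have hp1 : ppart (x + y - t) = 0 := max_eq_right (by linarith)
    have hp2 : ppart (t - x - y) = t - x - y := max_eq_left (by linarith)
    rw [hp1, hp2]
    simp only [mul_zero, neg_zero, Real.exp_zero]
    set s := Real.sqrt 2 / c with hs
    set L := Real.log (4 / c ^ 2) with hL
    set b := Real.exp (-x) with hb
    set d := Real.exp (-y) with hd
    have hb0 : 0 < b := Real.exp_pos _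
    have hd0 : 0 < d := Real.exp_pos _
    have hid : (s + L + 1) * (b + d + 1 + (t - x - y))
        = (s + L + 1) * (b + d) + (s + L) * (t - x - y) + (s + L + 1) + (t - x - y) := by ring
    have h1 : 0 ≤ (s + L + 1) * (b + d) := mul_nonneg (by linarith) (by linarith)
    have h2 : 0 ≤ (s + L) * (t - x - y) := mul_nonneg (by linarith) (by linarith)
    linarith
end

section
/- Fix l₀ > 0 and let E be a subset of {(x, y, t, h) : x, y, t, h ≥ 0, y ≥ h ≥ x, y ≥ l₀} ⊆ ℝ⁴. Setting F(x, y, t, h) := arsinh((cosh x · cosh(y - h) + cosh t · cosh h)/sinh y), there exists a constant c₁ with F(x, y, t, h) ≤ c₁ for every (x, y, t, h) ∈ E if and only if there exists a constant c₂ with (t + h - y)_+ ≤ c₂ for every (x, y, t, h) ∈ E. Moreover, if one of the inequalities holds with some constant, the other holds with a constant depending only on the first constant and l₀. -/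
/-- The function `F(x, y, t, h) := arsinh((cosh x · cosh(y - h) + cosh t · cosh h)/sinh y)`. -/
noncomputable def Ffun (x y t h : ℝ) : ℝ :=
  Real.arsinh ((Real.cosh x * Real.cosh (y - h) + Real.cosh t * Real.cosh h) / Real.sinh y)

lemma key1 (l₀ c₁ x y t h : ℝ) (hl₀ : 0 < l₀) (hx : 0 ≤ x) (hy : 0 ≤ y) (ht : 0 ≤ t)
    (hh : 0 ≤ h) (hxh : x ≤ h) (hhy : h ≤ y) (hly : l₀ ≤ y)
    (hF : Ffun x y t h ≤ c₁) :
    ppart (t + h - y) ≤ max (Real.log (4 * Real.sinh c₁)) 0 := by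
  have hypos : 0 < y := lt_of_lt_of_le hl₀ hly
  have hsy : 0 < Real.sinh y := Real.sinh_pos_iff.2 hypos
  set A : ℝ := (Real.cosh x * Real.cosh (y - h) + Real.cosh t * Real.cosh h) / Real.sinh y with hA
  have hAc : A ≤ Real.sinh c₁ := by
    have := Real.sinh_le_sinh.2 hF
    rwa [Ffun, Real.sinh_arsinh] at this
  have h1 : Real.exp (t + h) / 4 ≤ Real.cosh t * Real.cosh h := by
    nlinarith [Real.cosh_add t h, Real.cosh_eq (t + h), Real.exp_pos (-(t + h)),
      Real.sinh_nonneg_iff.2 ht, Real.sinh_nonneg_iff.2 hh, Real.cosh_sub_sinh t,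
      Real.cosh_sub_sinh h, Real.exp_pos (-t), Real.exp_pos (-h),
      Real.cosh_pos t, Real.cosh_pos h]
  have h2 : Real.sinh y ≤ Real.exp y := by
    nlinarith [Real.sinh_eq y, Real.exp_pos (-y), Real.exp_pos y]
  have h3 : Real.exp (t + h - y) / 4 ≤ A := by
    have hP : 0 ≤ Real.cosh x * Real.cosh (y - h) :=
      le_of_lt (mul_pos (Real.cosh_pos x) (Real.cosh_pos (y - h)))
    have step : Real.exp (t + h) / 4 / Real.exp y ≤ Real.cosh t * Real.cosh h / Real.sinh y :=
      div_le_div₀ (le_of_lt (mul_pos (Real.cosh_pos t) (Real.cosh_pos h))) h1 hsy h2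
    have step2 : Real.cosh t * Real.cosh h / Real.sinh y ≤ A := by
      rw [hA]
      gcongr
      nlinarith [mul_pos (Real.cosh_pos x) (Real.cosh_pos (y - h))]
    calc Real.exp (t + h - y) / 4 = Real.exp (t + h) / 4 / Real.exp y := by
          rw [Real.exp_sub]; ring
      _ ≤ Real.cosh t * Real.cosh h / Real.sinh y := step
      _ ≤ A := step2
  have h4 : Real.exp (t + h - y) ≤ 4 * Real.sinh c₁ := by linarith
  have h5 : t + h - y ≤ Real.log (4 * Real.sinh c₁) := by
    have := Real.log_le_log (Real.exp_pos _) h4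
    rwa [Real.log_exp] at this
  exact max_le_max h5 le_rfl

lemma key2 (l₀ c₂ x y t h : ℝ) (hl₀ : 0 < l₀) (hx : 0 ≤ x) (hy : 0 ≤ y) (ht : 0 ≤ t)
    (hh : 0 ≤ h) (hxh : x ≤ h) (hhy : h ≤ y) (hly : l₀ ≤ y)
    (hp : ppart (t + h - y) ≤ c₂) :
    Ffun x y t h ≤ Real.arsinh (2 * ((1 + 1 / Real.sinh l₀) * Real.cosh (max c₂ 0)
      + Real.sinh (max c₂ 0))) := by
  set d : ℝ := max c₂ 0 with hd
  have hd0 : 0 ≤ d := le_max_right _ _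
  have hypos : 0 < y := lt_of_lt_of_le hl₀ hly
  have hsy : 0 < Real.sinh y := Real.sinh_pos_iff.2 hypos
  have hsl : 0 < Real.sinh l₀ := Real.sinh_pos_iff.2 hl₀
  have hthd : t + h ≤ y + d := by
    have h1 : t + h - y ≤ ppart (t + h - y) := le_max_left _ _
    have h2 : c₂ ≤ d := le_max_left _ _
    linarith
  rw [Ffun]
  apply Real.arsinh_le_arsinh.2
  rw [div_le_iff₀ hsy]
  -- bound the numerator
  have b1 : Real.cosh x * Real.cosh (y - h) ≤ Real.cosh y := by
    have hxh' : Real.cosh x ≤ Real.cosh h :=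
      Real.cosh_le_cosh.2 (by rw [abs_of_nonneg hx, abs_of_nonneg hh]; exact hxh)
    have hca := Real.cosh_add h (y - h)
    rw [show h + (y - h) = y by ring] at hca
    have hs1 : 0 ≤ Real.sinh h := Real.sinh_nonneg_iff.2 hh
    have hs2 : 0 ≤ Real.sinh (y - h) := Real.sinh_nonneg_iff.2 (by linarith)
    nlinarith [mul_le_mul_of_nonneg_right hxh' (Real.cosh_pos (y - h)).le]
  have b2 : Real.cosh t * Real.cosh h ≤ Real.cosh (y + d) := by
    have e1 : Real.cosh t * Real.cosh h ≤ Real.cosh (t + h) := by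
      have := Real.cosh_add t h
      have hs1 : 0 ≤ Real.sinh t := Real.sinh_nonneg_iff.2 ht
      have hs2 : 0 ≤ Real.sinh h := Real.sinh_nonneg_iff.2 hh
      nlinarith
    have e2 : Real.cosh (t + h) ≤ Real.cosh (y + d) :=
      Real.cosh_le_cosh.2 (by
        rw [abs_of_nonneg (by linarith), abs_of_nonneg (by linarith)]; exact hthd)
    linarith
  have b3 : Real.cosh y ≤ Real.cosh (y + d) :=
    Real.cosh_le_cosh.2 (by
      rw [abs_of_nonneg (by linarith), abs_of_nonneg (by linarith)]; linarith)
  have b4 : Real.cosh y ≤ Real.sinh y + 1 := by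
    have := Real.cosh_sub_sinh y
    have : Real.exp (-y) ≤ 1 := Real.exp_le_one_iff.2 (by linarith)
    linarith [Real.cosh_sub_sinh y]
  have b5 : 1 ≤ Real.sinh y / Real.sinh l₀ :=
    (one_le_div hsl).2 (Real.sinh_le_sinh.2 hly)
  have b6 := Real.cosh_add y d
  have hcd : 0 < Real.cosh d := Real.cosh_pos d
  have hsd : 0 ≤ Real.sinh d := Real.sinh_nonneg_iff.2 hd0
  have key : Real.cosh (y + d) ≤ ((1 + 1 / Real.sinh l₀) * Real.cosh d + Real.sinh d)
      * Real.sinh y := by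
    have h7 : Real.cosh d ≤ (Real.sinh y / Real.sinh l₀) * Real.cosh d :=
      le_mul_of_one_le_left hcd.le b5
    have h8 : Real.sinh y / Real.sinh l₀ = 1 / Real.sinh l₀ * Real.sinh y := by ring
    nlinarith
  nlinarith [mul_pos (Real.cosh_pos x) (Real.cosh_pos (y - h))]

/-- Fix `l₀ > 0` and let `E ⊆ {(x, y, t, h) : x, y, t, h ≥ 0, y ≥ h ≥ x, y ≥ l₀} ⊆ ℝ⁴`.
There exists a constant `c₁` with `F(x, y, t, h) ≤ c₁` for every `(x, y, t, h) ∈ E` if and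
only if there exists a constant `c₂` with `(t + h - y)₊ ≤ c₂` for every `(x, y, t, h) ∈ E`.
Moreover, if one of the inequalities holds with some constant, the other holds with a
constant depending only on the first constant and `l₀`. -/
theorem stmt11 (l₀ : ℝ) (hl₀ : 0 < l₀) :
    (∀ E : Set (ℝ × ℝ × ℝ × ℝ),
      E ⊆ {p : ℝ × ℝ × ℝ × ℝ | 0 ≤ p.1 ∧ 0 ≤ p.2.1 ∧ 0 ≤ p.2.2.1 ∧ 0 ≤ p.2.2.2 ∧
        p.2.2.2 ≤ p.2.1 ∧ p.1 ≤ p.2.2.2 ∧ l₀ ≤ p.2.1} →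
      ((∃ c₁ : ℝ, ∀ p ∈ E, Ffun p.1 p.2.1 p.2.2.1 p.2.2.2 ≤ c₁) ↔
        (∃ c₂ : ℝ, ∀ p ∈ E, ppart (p.2.2.1 + p.2.2.2 - p.2.1) ≤ c₂))) ∧
    (∀ c₁ : ℝ, ∃ c₂ : ℝ, ∀ x y t h : ℝ,
      0 ≤ x → 0 ≤ y → 0 ≤ t → 0 ≤ h → x ≤ h → h ≤ y → l₀ ≤ y →
      Ffun x y t h ≤ c₁ → ppart (t + h - y) ≤ c₂) ∧
    (∀ c₂ : ℝ, ∃ c₁ : ℝ, ∀ x y t h : ℝ,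
      0 ≤ x → 0 ≤ y → 0 ≤ t → 0 ≤ h → x ≤ h → h ≤ y → l₀ ≤ y →
      ppart (t + h - y) ≤ c₂ → Ffun x y t h ≤ c₁) := by
  have K1 : ∀ c₁ : ℝ, ∀ x y t h : ℝ,
      0 ≤ x → 0 ≤ y → 0 ≤ t → 0 ≤ h → x ≤ h → h ≤ y → l₀ ≤ y →
      Ffun x y t h ≤ c₁ → ppart (t + h - y) ≤ max (Real.log (4 * Real.sinh c₁)) 0 :=
    fun c₁ x y t h hx hy ht hh hxh hhy hly hF =>
      key1 l₀ c₁ x y t h hl₀ hx hy ht hh hxh hhy hly hF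
  have K2 : ∀ c₂ : ℝ, ∀ x y t h : ℝ,
      0 ≤ x → 0 ≤ y → 0 ≤ t → 0 ≤ h → x ≤ h → h ≤ y → l₀ ≤ y →
      ppart (t + h - y) ≤ c₂ →
      Ffun x y t h ≤ Real.arsinh (2 * ((1 + 1 / Real.sinh l₀) * Real.cosh (max c₂ 0)
        + Real.sinh (max c₂ 0))) :=
    fun c₂ x y t h hx hy ht hh hxh hhy hly hp =>
      key2 l₀ c₂ x y t h hl₀ hx hy ht hh hxh hhy hly hp
  refine ⟨fun E hE => ⟨?_, ?_⟩, fun c₁ => ⟨_, K1 c₁⟩, fun c₂ => ⟨_, K2 c₂⟩⟩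
  · rintro ⟨c₁, hc⟩
    refine ⟨max (Real.log (4 * Real.sinh c₁)) 0, fun p hp => ?_⟩
    obtain ⟨h1, h2, h3, h4, h5, h6, h7⟩ := hE hp
    exact K1 c₁ p.1 p.2.1 p.2.2.1 p.2.2.2 h1 h2 h3 h4 h6 h5 h7 (hc p hp)
  · rintro ⟨c₂, hc⟩
    refine ⟨Real.arsinh (2 * ((1 + 1 / Real.sinh l₀) * Real.cosh (max c₂ 0)
      + Real.sinh (max c₂ 0))), fun p hp => ?_⟩
    obtain ⟨h1, h2, h3, h4, h5, h6, h7⟩ := hE hp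
    exact K2 c₂ p.1 p.2.1 p.2.2.1 p.2.2.2 h1 h2 h3 h4 h6 h5 h7 (hc p hp)
end

section
/- Let c > 0 and let x, y, x', y' be positive reals and t, t' nonnegative reals with |x' - x| ≤ c, |y' - y| ≤ c and |t' - t| ≤ c. Then e^{-x'} + e^{-y'} + e^{-(1/2)(x' + y' - t')_+} + (t' - x' - y')_+ ≤ (1 + 3c) e^{3c/2} · (e^{-x} + e^{-y} + e^{-(1/2)(x + y - t)_+} + (t - x - y)_+). -/
/-- Let `c > 0` and let `x, y, x', y'` be positive reals and `t, t'` nonnegative reals with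
`|x' - x| ≤ c`, `|y' - y| ≤ c` and `|t' - t| ≤ c`. Then
`e^{-x'} + e^{-y'} + e^{-(1/2)(x' + y' - t')₊} + (t' - x' - y')₊
  ≤ (1 + 3c) e^{3c/2} (e^{-x} + e^{-y} + e^{-(1/2)(x + y - t)₊} + (t - x - y)₊)`. -/
theorem stmt15 (c x y x' y' t t' : ℝ) (hc : 0 < c)
    (hx : 0 < x) (hy : 0 < y) (hx' : 0 < x') (hy' : 0 < y') (ht : 0 ≤ t) (ht' : 0 ≤ t')
    (h1 : |x' - x| ≤ c) (h2 : |y' - y| ≤ c) (h3 : |t' - t| ≤ c) :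
    Real.exp (-x') + Real.exp (-y') + Real.exp (-(1/2) * ppart (x' + y' - t')) +
        ppart (t' - x' - y') ≤
      (1 + 3 * c) * Real.exp (3 * c / 2) *
        (Real.exp (-x) + Real.exp (-y) + Real.exp (-(1/2) * ppart (x + y - t)) +
          ppart (t - x - y)) := by
  obtain ⟨h1a, h1b⟩ := abs_le.mp h1
  obtain ⟨h2a, h2b⟩ := abs_le.mp h2
  obtain ⟨h3a, h3b⟩ := abs_le.mp h3
  set E3 := Real.exp (-(1/2) * ppart (x + y - t)) with hE3
  have hE3pos : 0 < E3 := Real.exp_pos _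
  have hec : (1:ℝ) ≤ Real.exp (3 * c / 2) := Real.one_le_exp (by linarith)
  have hb1 : Real.exp (-x') ≤ Real.exp (3*c/2) * Real.exp (-x) := by
    rw [← Real.exp_add]; exact Real.exp_le_exp.mpr (by linarith)
  have hb2 : Real.exp (-y') ≤ Real.exp (3*c/2) * Real.exp (-y) := by
    rw [← Real.exp_add]; exact Real.exp_le_exp.mpr (by linarith)
  have hpp : ppart (x + y - t) ≤ ppart (x' + y' - t') + 3*c := by
    apply max_le
    · have : x' + y' - t' ≤ ppart (x' + y' - t') := le_max_left _ _; linarith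
    · have : (0:ℝ) ≤ ppart (x' + y' - t') := le_max_right _ _; linarith
  have hb3 : Real.exp (-(1/2) * ppart (x' + y' - t')) ≤ Real.exp (3*c/2) * E3 := by
    rw [hE3, ← Real.exp_add]; exact Real.exp_le_exp.mpr (by linarith)
  have hppnn : 0 ≤ ppart (t - x - y) := le_max_right _ _
  have hb4 : ppart (t' - x' - y') ≤ ppart (t - x - y) + 3*c*(Real.exp (3*c/2)*E3) := by
    rcases le_or_gt (t' - x' - y') 0 with h | h
    · have h0 : ppart (t' - x' - y') = 0 := max_eq_right h
      rw [h0]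
      have : 0 ≤ 3*c*(Real.exp (3*c/2)*E3) := by positivity
      linarith
    · have hA : ppart (t' - x' - y') = t' - x' - y' := max_eq_left h.le
      have hP : ppart (x + y - t) ≤ 3*c := by
        apply max_le <;> linarith
      have hEge : Real.exp (-(3*c/2)) ≤ E3 := by
        rw [hE3]; exact Real.exp_le_exp.mpr (by linarith)
      have hkey : 3*c ≤ 3*c*(Real.exp (3*c/2)*E3) := by
        have h5 : 3*c*(Real.exp (3*c/2)*Real.exp (-(3*c/2))) = 3*c := by
          rw [← Real.exp_add]; simp
        nlinarith [Real.exp_pos (3*c/2), mul_le_mul_of_nonneg_left hEge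
          (le_of_lt (by positivity : (0:ℝ) < 3*c*Real.exp (3*c/2)))]
      have hle : t' - x' - y' ≤ ppart (t - x - y) + 3*c := by
        have : t - x - y ≤ ppart (t - x - y) := le_max_left _ _; linarith
      rw [hA]; linarith
  nlinarith [Real.exp_pos (-x), Real.exp_pos (-y), hE3pos, hb1, hb2, hb3, hb4, hec, hc,
    hppnn, mul_nonneg (le_of_lt hc) hppnn,
    mul_pos hc (Real.exp_pos (-x)), mul_pos hc (Real.exp_pos (-y)),
    mul_le_mul_of_nonneg_left hec (mul_nonneg (by positivity : (0:ℝ) ≤ 3*c) hppnn)]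
end

section
/- Let c > 0, let x, y be positive reals, and let r ≥ 0 satisfy r ≤ 2c + |x - y|. Then e^{-(1/2)(x + y - r)_+} + (r - x - y)_+ ≤ (1 + 2c) e^c (e^{-x} + e^{-y}); consequently, setting Δ := e^{-x} + e^{-y} + e^{-(1/2)(x + y - r)_+} + (r - x - y)_+, one has e^{-x} + e^{-y} ≤ Δ ≤ (1 + (1 + 2c) e^c)(e^{-x} + e^{-y}). -/
/-- Let `c > 0`, let `x, y` be positive reals, and let `r ≥ 0` satisfy `r ≤ 2c + |x - y|`.
Then `e^{-(1/2)(x + y - r)₊} + (r - x - y)₊ ≤ (1 + 2c) e^c (e^{-x} + e^{-y})`; consequently,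
setting `Δ := e^{-x} + e^{-y} + e^{-(1/2)(x + y - r)₊} + (r - x - y)₊`, one has
`e^{-x} + e^{-y} ≤ Δ ≤ (1 + (1 + 2c) e^c)(e^{-x} + e^{-y})`. -/
theorem stmt16 (c x y r : ℝ) (hc : 0 < c) (hx : 0 < x) (hy : 0 < y) (hr : 0 ≤ r)
    (hrb : r ≤ 2 * c + |x - y|) :
    Real.exp (-(1/2) * ppart (x + y - r)) + ppart (r - x - y) ≤
        (1 + 2 * c) * Real.exp c * (Real.exp (-x) + Real.exp (-y)) ∧
    Real.exp (-x) + Real.exp (-y) ≤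
        Real.exp (-x) + Real.exp (-y) + Real.exp (-(1/2) * ppart (x + y - r)) +
          ppart (r - x - y) ∧
    Real.exp (-x) + Real.exp (-y) + Real.exp (-(1/2) * ppart (x + y - r)) +
        ppart (r - x - y) ≤
      (1 + (1 + 2 * c) * Real.exp c) * (Real.exp (-x) + Real.exp (-y)) := by
  set m := min x y with hm
  have habs : |x - y| = x + y - 2 * m := by
    rcases le_total x y with h | h
    · rw [abs_of_nonpos (by linarith), hm, min_eq_left h]; ring
    · rw [abs_of_nonneg (by linarith), hm, min_eq_right h]; ring
  have hsum : Real.exp (-m) ≤ Real.exp (-x) + Real.exp (-y) := by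
    rcases le_total x y with h | h
    · rw [hm, min_eq_left h]
      exact le_add_of_nonneg_right (Real.exp_pos _).le
    · rw [hm, min_eq_right h]
      exact le_add_of_nonneg_left (Real.exp_pos _).le
  have hc1 : (1:ℝ) ≤ 1 + 2 * c := by linarith
  have hmain : Real.exp (-(1/2) * ppart (x + y - r)) + ppart (r - x - y) ≤
      (1 + 2 * c) * Real.exp c * (Real.exp (-x) + Real.exp (-y)) := by
    by_cases hcase : r ≤ x + y
    · have h1 : ppart (x + y - r) = x + y - r := max_eq_left (by linarith)
      have h2 : ppart (r - x - y) = 0 := max_eq_right (by linarith)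
      rw [h1, h2, add_zero]
      have hle : -(1/2) * (x + y - r) ≤ c - m := by
        rw [habs] at hrb; linarith
      calc Real.exp (-(1/2) * (x + y - r)) ≤ Real.exp (c - m) := Real.exp_le_exp.mpr hle
        _ = Real.exp c * Real.exp (-m) := by rw [← Real.exp_add]; ring_nf
        _ ≤ Real.exp c * (Real.exp (-x) + Real.exp (-y)) := by
            exact mul_le_mul_of_nonneg_left hsum (Real.exp_pos _).le
        _ ≤ (1 + 2 * c) * Real.exp c * (Real.exp (-x) + Real.exp (-y)) := by
            have hpos : 0 ≤ Real.exp c * (Real.exp (-x) + Real.exp (-y)) := by positivity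
            nlinarith
    · push_neg at hcase
      have h1 : ppart (x + y - r) = 0 := max_eq_right (by linarith)
      have h2 : ppart (r - x - y) = r - x - y := max_eq_left (by linarith)
      rw [h1, h2, mul_zero, Real.exp_zero]
      have hmc : m ≤ c := by
        rw [habs] at hrb
        have : 2 * m ≤ x + y := by rcases le_total x y with h|h <;>
          simp [hm, min_eq_left, min_eq_right, h] <;> linarith
        linarith
      have h3 : (1:ℝ) ≤ Real.exp c * (Real.exp (-x) + Real.exp (-y)) := by
        calc (1:ℝ) = Real.exp 0 := (Real.exp_zero).symm
          _ ≤ Real.exp (c - m) := Real.exp_le_exp.mpr (by linarith)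
          _ = Real.exp c * Real.exp (-m) := by rw [← Real.exp_add]; ring_nf
          _ ≤ Real.exp c * (Real.exp (-x) + Real.exp (-y)) :=
            mul_le_mul_of_nonneg_left hsum (Real.exp_pos _).le
      have h4 : 1 + (r - x - y) ≤ 1 + 2 * c := by
        rw [habs] at hrb
        have hm0 : 0 ≤ m := le_min hx.le hy.le
        linarith
      nlinarith
  refine ⟨hmain, ?_, ?_⟩
  · have h1 := (Real.exp_pos (-(1/2) * ppart (x + y - r))).le
    have h2 : (0:ℝ) ≤ ppart (r - x - y) := le_max_right _ _
    linarith
  · nlinarith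
end

section
/- Let l⁰ > 0 and c₂ > 0 be constants, and suppose l₁ ≤ l⁰ and ∑_{k=n}^∞ e^{-l_k} ≤ c₂ e^{-l_n} for every n > 1. Then K⁰ := sup_{n ≥ 1} sup_{h ∈ [0, l_n]} inf_{m ≥ 1} Γ^0_{nm}(h) ≤ max{c₂, l⁰}. -/
/-- The function `Γ⁰_{nm}(h)` associated to the sequence `{l_n}`. -/
noncomputable def Gamma0F (l : ℕ → ℝ) (n m : ℕ) (h : ℝ) : ℝ :=
  if m < n then
    (if l m ≤ h then
      Real.exp h * ∑ k ∈ Finset.Icc (m + 1) n, Real.exp (-l k)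
    else
      l m - h + Real.exp h * ∑ k ∈ Finset.Icc m n, Real.exp (-l k))
  else if m = n then min h (l n - h)
  else
    (if l m ≤ h then
      Real.exp h * ∑ k ∈ Finset.Icc n (m - 1), Real.exp (-l k)
    else
      l m - h + Real.exp h * ∑ k ∈ Finset.Icc n m, Real.exp (-l k))

/-- `inf_{m ≥ 1} Γ⁰_{nm}(h)`. -/
noncomputable def infGamma0F (l : ℕ → ℝ) (n : ℕ) (h : ℝ) : ℝ :=
  sInf {x : ℝ | ∃ m : ℕ, 1 ≤ m ∧ x = Gamma0F l n m h}

/-- The set whose supremum is `K⁰ = sup_{n ≥ 1} sup_{h ∈ [0, l_n]} inf_{m ≥ 1} Γ⁰_{nm}(h)`. -/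
def K0SetF (l : ℕ → ℝ) : Set ℝ :=
  {x : ℝ | ∃ n : ℕ, 1 ≤ n ∧ ∃ h : ℝ, 0 ≤ h ∧ h ≤ l n ∧ x = infGamma0F l n h}

/-- Let `l⁰ > 0` and `c₂ > 0` be constants, and suppose `l₁ ≤ l⁰` and
`∑_{k=n}^∞ e^{-l_k} ≤ c₂ e^{-l_n}` for every `n > 1` (stated via all partial sums, which is
equivalent since the terms are positive). Then
`K⁰ := sup_{n ≥ 1} sup_{h ∈ [0, l_n]} inf_{m ≥ 1} Γ⁰_{nm}(h) ≤ max {c₂, l⁰}` (expressed by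
bounding each `inf_{m ≥ 1} Γ⁰_{nm}(h)` for `n ≥ 1`, `h ∈ [0, l_n]`). -/
theorem stmt17 (l : ℕ → ℝ) (hl : ∀ n : ℕ, 1 ≤ n → 0 < l n)
    (l0 c₂ : ℝ) (hl0 : 0 < l0) (hc₂ : 0 < c₂) (hl1 : l 1 ≤ l0)
    (hsum : ∀ n : ℕ, 1 < n → ∀ n₀ : ℕ,
      ∑ k ∈ Finset.Icc n n₀, Real.exp (-l k) ≤ c₂ * Real.exp (-l n)) :
    ∀ n : ℕ, 1 ≤ n → ∀ h : ℝ, 0 ≤ h → h ≤ l n → infGamma0F l n h ≤ max c₂ l0 := by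
  intro n hn h hh0 hhn
  -- it suffices to exhibit one m ≥ 1 with `Gamma0F l n m h ≤ max c₂ l0`
  have key : ∀ m : ℕ, 1 ≤ m → Gamma0F l n m h ≤ max c₂ l0 →
      infGamma0F l n h ≤ max c₂ l0 := by
    intro m hm hG
    unfold infGamma0F
    by_cases hb : BddBelow {x : ℝ | ∃ m : ℕ, 1 ≤ m ∧ x = Gamma0F l n m h}
    · exact le_trans (csInf_le hb ⟨m, hm, rfl⟩) hG
    · rw [Real.sInf_of_not_bddBelow hb]
      exact le_max_of_le_right hl0.le
  by_cases hln : n = 1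
  · -- use m = n = 1
    refine key 1 le_rfl ?_
    subst hln
    have : Gamma0F l 1 1 h = min h (l 1 - h) := by
      unfold Gamma0F; simp
    rw [this]
    exact le_max_of_le_right (le_trans (min_le_left _ _) (le_trans hhn hl1))
  · have hn2 : 2 ≤ n := by omega
    by_cases hcase : h < l 1
    · -- use m = n
      refine key n hn ?_
      have : Gamma0F l n n h = min h (l n - h) := by
        unfold Gamma0F; simp
      rw [this]
      exact le_max_of_le_right (le_trans (min_le_left _ _)
        (le_trans hcase.le hl1))
    · push_neg at hcase
      -- take A the largest m < n with l m ≤ h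
      set S := (Finset.Ico 1 n).filter (fun m => l m ≤ h) with hS
      have hSne : S.Nonempty := ⟨1, by simp [hS, hcase]; omega⟩
      set A := S.max' hSne with hA
      have hAmem : A ∈ S := S.max'_mem hSne
      have hA1 : 1 ≤ A := by
        have := (Finset.mem_filter.mp hAmem).1
        simp only [Finset.mem_Ico] at this; exact this.1
      have hAn : A < n := by
        have := (Finset.mem_filter.mp hAmem).1
        simp only [Finset.mem_Ico] at this; exact this.2
      have hlA : l A ≤ h := (Finset.mem_filter.mp hAmem).2
      have hmax : ∀ m ∈ S, m ≤ A := fun m hm => S.le_max' m hm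
      -- show h ≤ l (A+1)
      have hhA1 : h ≤ l (A + 1) := by
        rcases eq_or_lt_of_le (Nat.succ_le_of_lt hAn) with heq | hlt
        · have : A + 1 = n := heq
          rw [this]; exact hhn
        · by_contra hcon
          push_neg at hcon
          have : A + 1 ∈ S := by
            simp [hS, Finset.mem_Ico]
            exact ⟨hlt, hcon.le⟩
          exact absurd (hmax _ this) (by omega)
      refine key A hA1 ?_
      have hGA : Gamma0F l n A h =
          Real.exp h * ∑ k ∈ Finset.Icc (A + 1) n, Real.exp (-l k) := by
        unfold Gamma0F
        rw [if_pos hAn, if_pos hlA]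
      rw [hGA]
      refine le_max_of_le_left ?_
      have hsum' : ∑ k ∈ Finset.Icc (A + 1) n, Real.exp (-l k)
          ≤ c₂ * Real.exp (-l (A + 1)) := hsum (A + 1) (by omega) n
      calc Real.exp h * ∑ k ∈ Finset.Icc (A + 1) n, Real.exp (-l k)
          ≤ Real.exp h * (c₂ * Real.exp (-l (A + 1))) := by
            exact mul_le_mul_of_nonneg_left hsum' (Real.exp_nonneg h)
        _ = c₂ * Real.exp (h - l (A + 1)) := by
            rw [mul_comm, mul_assoc, ← Real.exp_add]; ring_nf
        _ ≤ c₂ * 1 := by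
            refine mul_le_mul_of_nonneg_left ?_ hc₂.le
            rw [← Real.exp_zero]
            exact Real.exp_le_exp.mpr (by linarith)
        _ = c₂ := mul_one c₂
end
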